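/- arXiv:1107.4902 — 5 statements merged into one kernel-verified Lean document; each statement's English description precedes it below -/
import Mathlib

section
/- Let G be a finite connected simple graph, let r be a vertex of G, and let C be a pebbling configuration on G. If the weighted sum ∑_{v ∈ V(G)} C(v) · 2^{−dist(v,r)} < 1 (where dist denotes graph distance), then no finite sequence of pebbling moves starting from C results in a configuration with at least one pebble on r; in particular C is unsolvable. -/
open Finset

/-- A single pebbling move on `G`: remove two pebbles from a vertex `u` with at least
two pebbles and add one pebble to a vertex `v` adjacent to `u`. -/
def PebblingMove {V : Type*} [DecidableEq V] (G : SimpleGraph V) (C C' : V → ℕ) : Prop :=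
  ∃ u v : V, G.Adj u v ∧ 2 ≤ C u ∧
    C' = fun w => if w = u then C u - 2 else if w = v then C v + 1 else C w

/-- A configuration is solvable if every vertex can receive a pebble after finitely
many pebbling moves. -/
def Solvable {V : Type*} [DecidableEq V] (G : SimpleGraph V) (C : V → ℕ) : Prop :=
  ∀ v : V, ∃ C' : V → ℕ, Relation.ReflTransGen (PebblingMove G) C C' ∧ 1 ≤ C' v

/-- The pebbling number `π(G)`: the least `t` such that every configuration of size `t`
is solvable. -/
noncomputable def pebblingNumber {V : Type*} [Fintype V] [DecidableEq V]
    (G : SimpleGraph V) : ℕ :=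
  sInf {t : ℕ | ∀ C : V → ℕ, (∑ v, C v) = t → Solvable G C}

/-- The finset of all configurations of `t` pebbles on `n` vertices. -/
def configs (n t : ℕ) : Finset (Fin n → ℕ) :=
  (Fintype.piFinset fun _ : Fin n => Finset.range (t + 1)).filter fun C => ∑ i, C i = t

open scoped Classical in
/-- `P(G; t)`: the proportion of solvable configurations among all `C(n+t-1, t)`
configurations of size `t`. -/
noncomputable def solvableProportion (n : ℕ) (G : SimpleGraph (Fin n)) (t : ℕ) : ℝ :=
  (((configs n t).filter fun C => Solvable G C).card : ℝ) / (Nat.choose (n + t - 1) t : ℝ)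

/-- `τ_α(G)`: the least `t` with `P(G;t) ≥ α`. -/
noncomputable def tauAlpha (n : ℕ) (G : SimpleGraph (Fin n)) (α : ℝ) : ℕ :=
  sInf {t : ℕ | α ≤ solvableProportion n G t}

/-- A path on vertices `0, …, L-1` whose endpoint `L-1` is joined by an edge to vertex
`L` of the clique on vertices `L, …, n-1`. -/
def pathClique (n L : ℕ) : SimpleGraph (Fin n) :=
  SimpleGraph.fromRel fun i j =>
    (j.val = i.val + 1 ∧ j.val ≤ L) ∨ (L ≤ i.val ∧ L ≤ j.val)

/-- `G_n`: a path with `⌊log₂ n⌋` vertices attached to a clique on the remaining vertices. -/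
def Ggraph (n : ℕ) : SimpleGraph (Fin n) := pathClique n (Nat.log 2 n)

/-- Two disjoint paths on `0, …, L-1` and `L, …, 2L-1`, whose endpoints `L-1` and `2L-1`
are each joined by an edge to vertex `2L` of the clique on vertices `2L, …, n-1`. -/
def twoPathClique (n L : ℕ) : SimpleGraph (Fin n) :=
  SimpleGraph.fromRel fun i j =>
    (j.val = i.val + 1 ∧ j.val < L) ∨
    (L ≤ i.val ∧ j.val = i.val + 1 ∧ j.val < 2 * L) ∨
    (2 * L ≤ i.val ∧ 2 * L ≤ j.val) ∨
    (i.val + 1 = L ∧ j.val = 2 * L) ∨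
    (i.val + 1 = 2 * L ∧ j.val = 2 * L)

/-- `L' = ⌊(1/2)·log₂ n + m⌋`. -/
noncomputable def Lp (n m : ℕ) : ℕ := ⌊Real.logb 2 n / 2 + m⌋₊

/-- `H_n` with parameter `m`: two paths with `L'` vertices each, attached to a clique on
the remaining `n - 2L'` vertices. -/
noncomputable def Hgraph (n m : ℕ) : SimpleGraph (Fin n) := twoPathClique n (Lp n m)

/-!
Weight a pebble on `v` by `2^(-dist(v, r))`. A move from `u` to an adjacent `v` removes weight
`2 · 2^(-dist(u, r))` and adds `2^(-dist(v, r))`, which is no larger because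
`dist(u, r) ≤ dist(v, r) + 1`. So the total weight never increases, while a configuration with a
pebble on `r` has weight at least `1`.
-/

section

variable {V : Type*} {G : SimpleGraph V}

lemma SimpleGraph.Adj.two_zpow_neg_dist_le {u v : V} (huv : G.Adj u v) (r : V) :
    (2 : ℝ) ^ (-(G.dist v r : ℤ)) ≤ 2 * 2 ^ (-(G.dist u r : ℤ)) := by
  have hdist : G.dist u r ≤ G.dist v r + 1 := by
    have := huv.reachable.dist_triangle_left r
    rw [SimpleGraph.dist_eq_one_iff_adj.mpr huv] at this
    omega
  calc (2 : ℝ) ^ (-(G.dist v r : ℤ)) ≤ 2 ^ (1 + -(G.dist u r : ℤ)) :=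
        zpow_le_zpow_right₀ one_le_two (by omega)
    _ = 2 * 2 ^ (-(G.dist u r : ℤ)) := by rw [zpow_add₀ two_ne_zero, zpow_one]

variable [DecidableEq V] [Fintype V] {w : V → ℝ}

lemma PebblingMove.sum_mul_le (hw : ∀ u v, G.Adj u v → w v ≤ 2 * w u) {C C' : V → ℕ}
    (h : PebblingMove G C C') : ∑ x, (C' x : ℝ) * w x ≤ ∑ x, (C x : ℝ) * w x := by
  obtain ⟨u, v, huv, hu, rfl⟩ := h
  have hcast : ∀ x, ((if x = u then C u - 2 else if x = v then C v + 1 else C x : ℕ) : ℝ) =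
      C x - 2 * (if x = u then 1 else 0) + (if x = v then 1 else 0) := by
    intro x
    rcases eq_or_ne x u with rfl | hxu
    · simp [huv.ne, Nat.cast_sub hu]
    · rcases eq_or_ne x v with rfl | hxv <;> simp [*]
  simp only [hcast, add_mul, sub_mul, mul_assoc, ite_mul, one_mul, zero_mul, sum_add_distrib,
    sum_sub_distrib, ← mul_sum, sum_ite_eq', mem_univ, if_true]
  linarith [hw u v huv]

lemma PebblingMove.sum_mul_le_of_reflTransGen (hw : ∀ u v, G.Adj u v → w v ≤ 2 * w u) {C C' : V → ℕ}
    (h : Relation.ReflTransGen (PebblingMove G) C C') :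
    ∑ x, (C' x : ℝ) * w x ≤ ∑ x, (C x : ℝ) * w x := by
  induction h with
  | refl => exact le_rfl
  | tail _ hmove ih => exact (hmove.sum_mul_le hw).trans ih

end

theorem weight_lt_one_unsolvable_general {V : Type*} [Fintype V] [DecidableEq V]
    (G : SimpleGraph V) (r : V) (C : V → ℕ)
    (h : ∑ v : V, (C v : ℝ) * (2 : ℝ) ^ (-(G.dist v r : ℤ)) < 1) :
    (∀ C' : V → ℕ, Relation.ReflTransGen (PebblingMove G) C C' → ¬ 1 ≤ C' r) ∧
      ¬ Solvable G C := by
  have hunreachable : ∀ C' : V → ℕ, Relation.ReflTransGen (PebblingMove G) C C' →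
      ¬ 1 ≤ C' r := by
    intro C' hCC' hr
    have hle := PebblingMove.sum_mul_le_of_reflTransGen (fun u v huv => huv.two_zpow_neg_dist_le r) hCC'
    have hone : (1 : ℝ) ≤ ∑ v, (C' v : ℝ) * 2 ^ (-(G.dist v r : ℤ)) :=
      calc (1 : ℝ) ≤ C' r := by exact_mod_cast hr
        _ = C' r * 2 ^ (-(G.dist r r : ℤ)) := by simp
        _ ≤ _ := single_le_sum (f := fun v => (C' v : ℝ) * 2 ^ (-(G.dist v r : ℤ)))
          (fun v _ => by positivity) (mem_univ r)
    linarith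
  exact ⟨hunreachable, fun hsolv => let ⟨C', hCC', hr⟩ := hsolv r; hunreachable C' hCC' hr⟩

/-- If the weighted sum `∑_v C(v)·2^{-dist(v,r)}` is less than `1`, then
no sequence of pebbling moves starting from `C` puts a pebble on `r`; in particular `C`
is unsolvable. -/
theorem weight_lt_one_unsolvable {V : Type*} [Fintype V] [DecidableEq V]
    (G : SimpleGraph V) (hG : G.Connected) (r : V) (C : V → ℕ)
    (h : ∑ v : V, (C v : ℝ) * (2 : ℝ) ^ (-(G.dist v r : ℤ)) < 1) :
    (∀ C' : V → ℕ, Relation.ReflTransGen (PebblingMove G) C C' → ¬ 1 ≤ C' r) ∧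
      ¬ Solvable G C :=
  weight_lt_one_unsolvable_general G r C h
end

section
/- For all sufficiently large n, the pebbling number of G_n satisfies π(G_n) ≤ 3n. -/
open Finset

/-!
A configuration with at least `2 ^ L` pebbles on a path `w 0, …, w L` reaches every `w j`:
pushing pebbles greedily from `w 0` towards `w j` succeeds unless
`∑_{i ≤ j} C (w i) 2 ^ i < 2 ^ j`, and similarly from `w L`; if both fail, the two sides carry
at most `2 ^ j - 1` and `2 ^ (L - j) - 1` pebbles, and `2 ^ j + 2 ^ (L - j) ≤ 2 ^ L + 1`.

In `G_n`, with `2 ^ L ≤ n` and `3n` pebbles: to reach the path or the vertex `L` joining it to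
the clique, move half the pebbles of every other clique vertex onto `L`. Rounding down costs at
most one pebble per vertex, so the path `0, …, L` ends up with at least `(3n - n) / 2 = n`.
To reach another clique vertex `v`, either a third clique vertex holds two pebbles, or the
clique minus `v` holds at most `n` pebbles and the path `0, …, L, v` holds at least
`2n ≥ 2 ^ (L + 1)`.
-/

open Function

section Pebbling

variable {V : Type*} [DecidableEq V] {G : SimpleGraph V}

lemma pebblingMove_update {C : V → ℕ} {u v : V} (huv : G.Adj u v) (hu : 2 ≤ C u) :
    PebblingMove G C (update (update C u (C u - 2)) v (C v + 1)) := by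
  refine ⟨u, v, huv, hu, funext fun w => ?_⟩
  have := huv.ne
  by_cases hwv : w = v <;> by_cases hwu : w = u <;> simp_all

lemma reflTransGen_pebblingMove_transfer {C : V → ℕ} {u v : V} (huv : G.Adj u v) {k : ℕ}
    (hk : 2 * k ≤ C u) :
    Relation.ReflTransGen (PebblingMove G) C (update (update C u (C u - 2 * k)) v (C v + k)) := by
  induction k with
  | zero => simpa using .refl
  | succ k ih =>
    refine (ih (by omega)).tail ?_
    convert pebblingMove_update (C := update (update C u (C u - 2 * k)) v (C v + k)) huv
      (by rw [update_of_ne huv.ne, update_self]; omega) using 1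
    funext w
    by_cases hwv : w = v <;> by_cases hwu : w = u <;> simp_all <;> omega

lemma exists_reflTransGen_collect {h : V} {s : Finset V} (hs : h ∉ s)
    (hadj : ∀ x ∈ s, G.Adj x h) (C : V → ℕ) :
    ∃ C', Relation.ReflTransGen (PebblingMove G) C C' ∧ C' h = C h + ∑ x ∈ s, C x / 2 ∧
      ∀ y ∉ s, y ≠ h → C' y = C y := by
  induction s using Finset.induction_on generalizing C with
  | empty => exact ⟨C, .refl, by simp, fun _ _ _ => rfl⟩
  | insert a s ha ih =>
    rw [mem_insert, not_or] at hs
    obtain ⟨C', hC', hh, hrest⟩ := ih hs.2 (fun x hx => hadj x (mem_insert_of_mem hx)) C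
    have hCa : C' a = C a := hrest a ha (Ne.symm hs.1)
    refine ⟨_, hC'.trans (reflTransGen_pebblingMove_transfer (hadj a (mem_insert_self a s))
      (k := C' a / 2) (by omega)), ?_, fun y hy hyh => ?_⟩
    · rw [update_self, hh, hCa, sum_insert ha]
      ring
    · rw [mem_insert, not_or] at hy
      simp [hy.1, hyh, hrest y hy.2 hyh]

lemma exists_reflTransGen_chain (w : ℕ → V) (d : ℕ)
    (hadj : ∀ i < d, G.Adj (w i) (w (i + 1))) (hinj : Set.InjOn w (Set.Iic d)) (C : V → ℕ) :
    ∃ C', Relation.ReflTransGen (PebblingMove G) C C' ∧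
      (∑ i ∈ range (d + 1), C (w i) * 2 ^ i) / 2 ^ d ≤ C' (w d) := by
  induction d generalizing w C with
  | zero => exact ⟨C, .refl, by simp⟩
  | succ d ih =>
    have hw {i j : ℕ} (hi : i ≤ d + 1) (hj : j ≤ d + 1) (e : w i = w j) : i = j :=
      hinj hi hj e
    set C₁ := update (update C (w 0) (C (w 0) - 2 * (C (w 0) / 2))) (w 1) (C (w 1) + C (w 0) / 2)
    obtain ⟨C', hC', hle⟩ := ih (fun i => w (i + 1)) (fun i hi => hadj (i + 1) (by omega))
      (fun i hi j hj e => by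
        simp only [Set.mem_Iic] at hi hj
        have := hw (by omega : i + 1 ≤ d + 1) (by omega : j + 1 ≤ d + 1) e
        omega) C₁
    refine ⟨C', (reflTransGen_pebblingMove_transfer (hadj 0 (by omega)) (by omega)).trans hC',
      le_trans (le_of_eq ?_) hle⟩
    -- Pushing `C (w 0) / 2` pebbles to `w 1` loses nothing in the floor: with
    -- `S = ∑ C (w (i + 1)) 2 ^ i`, `(C (w 0) + 2 S) / 2 ^ (d + 1) = (C (w 0) / 2 + S) / 2 ^ d`.
    have hshift : ∀ i ∈ range d,
        C₁ (w (i + 1 + 1)) * 2 ^ (i + 1) = C (w (i + 1 + 1)) * 2 ^ (i + 1) := by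
      intro i hi
      rw [mem_range] at hi
      have h0 : w (i + 1 + 1) ≠ w 0 := fun e => by have := hw (by omega) (by omega) e; omega
      have h1 : w (i + 1 + 1) ≠ w 1 := fun e => by have := hw (by omega) (by omega) e; omega
      simp [C₁, h0, h1]
    have hsum : ∑ i ∈ range (d + 1), C₁ (w (i + 1)) * 2 ^ i =
        C (w 0) / 2 + ∑ i ∈ range (d + 1), C (w (i + 1)) * 2 ^ i := by
      rw [sum_range_succ', sum_range_succ' (fun i => C (w (i + 1)) * 2 ^ i), sum_congr rfl hshift]
      simp only [C₁, update_self]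
      ring
    rw [hsum, sum_range_succ', pow_succ', ← Nat.div_div_eq_div_mul]
    congr 1
    simp only [pow_succ, ← mul_assoc, ← sum_mul, pow_zero, mul_one]
    omega

lemma two_pow_add_two_pow_sub_le {j L : ℕ} (hj : j ≤ L) :
    2 ^ j + 2 ^ (L - j) ≤ 2 ^ L + 1 := by
  have h : 2 ^ j * 2 ^ (L - j) = 2 ^ L := by rw [← pow_add, Nat.add_sub_cancel' hj]
  nlinarith [Nat.one_le_two_pow (n := j), Nat.one_le_two_pow (n := L - j)]

lemma exists_reflTransGen_path (w : ℕ → V) (L : ℕ) (hadj : ∀ i < L, G.Adj (w i) (w (i + 1)))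
    (hinj : Set.InjOn w (Set.Iic L)) (C : V → ℕ)
    (hC : 2 ^ L ≤ ∑ i ∈ range (L + 1), C (w i)) {j : ℕ} (hj : j ≤ L) :
    ∃ C', Relation.ReflTransGen (PebblingMove G) C C' ∧ 1 ≤ C' (w j) := by
  have hweight (x : ℕ → V) (s : Finset ℕ) :
      ∑ i ∈ s, C (x i) ≤ ∑ i ∈ s, C (x i) * 2 ^ i :=
    sum_le_sum fun i _ => Nat.le_mul_of_pos_right _ (by positivity)
  obtain ⟨Cl, hCl, hl⟩ := exists_reflTransGen_chain w j (fun i hi => hadj i (by omega))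
    (hinj.mono (Set.Iic_subset_Iic.2 hj)) C
  by_cases hleft : 2 ^ j ≤ ∑ i ∈ range (j + 1), C (w i) * 2 ^ i
  · exact ⟨Cl, hCl, le_trans ((Nat.one_le_div_iff (by positivity)).2 hleft) hl⟩
  set w' : ℕ → V := fun i => w (L - i)
  obtain ⟨Cr, hCr, hr⟩ := exists_reflTransGen_chain w' (L - j)
    (fun i hi => by
      have := hadj (L - (i + 1)) (by omega)
      rwa [show L - (i + 1) + 1 = L - i by omega, G.adj_comm] at this)
    (fun a ha b hb e => by
      simp only [Set.mem_Iic] at ha hb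
      have := hinj (x₁ := L - a) (x₂ := L - b) (by simp) (by simp) e
      omega) C
  by_cases hright : 2 ^ (L - j) ≤ ∑ i ∈ range (L - j + 1), C (w' i) * 2 ^ i
  · refine ⟨Cr, hCr, ?_⟩
    rw [show w j = w' (L - j) by simp only [w']; congr; omega]
    exact le_trans ((Nat.one_le_div_iff (by positivity)).2 hright) hr
  have hsplit : ∑ i ∈ range (L + 1), C (w i) ≤
      ∑ i ∈ range (j + 1), C (w i) + ∑ i ∈ range (L - j + 1), C (w' i) := by
    have hreflect : ∑ i ∈ range (L - j + 1), C (w' i) = ∑ i ∈ Ico j (L + 1), C (w i) := by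
      rw [range_eq_Ico, sum_Ico_reflect (fun i => C (w i)) 0 (by omega)]
      congr 2; omega
    rw [hreflect, range_eq_Ico, ← sum_Ico_consecutive _ (Nat.zero_le j) (by omega : j ≤ L + 1)]
    gcongr
    intro i
    simp only [mem_Ico, mem_range]
    omega
  have := hweight w (range (j + 1))
  have := hweight w' (range (L - j + 1))
  have := two_pow_add_two_pow_sub_le hj
  omega

end Pebbling

section PathClique

variable {n L : ℕ}

lemma pathClique_adj_succ {i : ℕ} (hi : i < L) (hL : L < n) :
    (pathClique n L).Adj ⟨i, by omega⟩ ⟨i + 1, by omega⟩ := by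
  rw [pathClique, SimpleGraph.fromRel_adj]
  exact ⟨by simp, Or.inl (Or.inl ⟨rfl, hi⟩)⟩

lemma pathClique_adj_of_le {a b : Fin n} (ha : L ≤ a.val) (hb : L ≤ b.val) (hab : a ≠ b) :
    (pathClique n L).Adj a b := by
  rw [pathClique, SimpleGraph.fromRel_adj]
  exact ⟨hab, Or.inl (Or.inr ⟨ha, hb⟩)⟩

def pathCliqueChain (hL : L < n) (v : Fin n) (i : ℕ) : Fin n :=
  if h : i ≤ L then ⟨i, by omega⟩ else v

variable (hL : L < n) (v : Fin n)

lemma pathCliqueChain_of_le {i : ℕ} (hi : i ≤ L) : pathCliqueChain hL v i = ⟨i, by omega⟩ :=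
  dif_pos hi

lemma pathCliqueChain_succ : pathCliqueChain hL v (L + 1) = v :=
  dif_neg (by omega)

lemma pathCliqueChain_adj {i : ℕ} (hi : i < L) :
    (pathClique n L).Adj (pathCliqueChain hL v i) (pathCliqueChain hL v (i + 1)) := by
  rw [pathCliqueChain_of_le hL v hi.le, pathCliqueChain_of_le hL v hi]
  exact pathClique_adj_succ hi hL

lemma pathCliqueChain_adj_succ (hv : L < v.val) :
    (pathClique n L).Adj (pathCliqueChain hL v L) (pathCliqueChain hL v (L + 1)) := by
  rw [pathCliqueChain_of_le hL v le_rfl, pathCliqueChain_succ]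
  exact pathClique_adj_of_le le_rfl hv.le (fun h => by simp [← h] at hv)

lemma pathCliqueChain_injOn : Set.InjOn (pathCliqueChain hL v) (Set.Iic L) := by
  intro a ha b hb e
  simp only [Set.mem_Iic] at ha hb
  rwa [pathCliqueChain_of_le hL v ha, pathCliqueChain_of_le hL v hb, Fin.mk.injEq] at e

lemma pathCliqueChain_injOn_succ (hv : L < v.val) :
    Set.InjOn (pathCliqueChain hL v) (Set.Iic (L + 1)) := by
  intro a ha b hb e
  simp only [Set.mem_Iic] at ha hb
  simp only [pathCliqueChain] at e
  split_ifs at e <;> simp [Fin.ext_iff] at e <;> omega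

lemma sum_range_pathCliqueChain (f : Fin n → ℕ) :
    ∑ i ∈ range (L + 1), f (pathCliqueChain hL v i) = ∑ x with x.val ≤ L, f x := by
  have hc {i : ℕ} (hi : i ∈ range (L + 1)) :
      pathCliqueChain hL v i = ⟨i, (Nat.lt_succ_iff.1 (mem_range.1 hi)).trans_lt hL⟩ :=
    pathCliqueChain_of_le hL v (by simpa [Nat.lt_succ_iff] using hi)
  refine sum_nbij' (pathCliqueChain hL v) Fin.val (fun i hi => ?_) (fun x hx => ?_)
    (fun i hi => by rw [hc hi]) (fun x hx => ?_) (fun _ _ => rfl)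
  · simpa [hc hi, Nat.lt_succ_iff] using hi
  · simpa [Nat.lt_succ_iff] using hx
  · exact pathCliqueChain_of_le hL v (by simpa using hx)

end PathClique

section Solvable

variable {n L : ℕ}

lemma sum_filter_le_add_sum_filter_lt (C : Fin n → ℕ) :
    ∑ x with x.val ≤ L, C x + ∑ x with L < x.val, C x = ∑ x, C x := by
  simpa only [not_le] using sum_filter_add_sum_filter_not univ (fun x : Fin n => x.val ≤ L) C

lemma exists_reflTransGen_pathClique_of_le (hn : 2 ^ L ≤ n) {C : Fin n → ℕ}
    (hC : 3 * n ≤ ∑ x, C x) {v : Fin n} (hv : v.val ≤ L) :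
    ∃ C', Relation.ReflTransGen (PebblingMove (pathClique n L)) C C' ∧ 1 ≤ C' v := by
  have hL : L < n := Nat.lt_two_pow_self.trans_le hn
  set hub : Fin n := ⟨L, hL⟩
  set s : Finset (Fin n) := {x | L < x.val}
  obtain ⟨C₁, hC₁, hhub, hrest⟩ :=
    exists_reflTransGen_collect (G := pathClique n L) (h := hub) (s := s) (by simp [s, hub])
      (fun x hx => pathClique_adj_of_le (mem_filter.1 hx).2.le le_rfl
        (fun h => by simp [s, h, hub] at hx)) C
  have hpath : ∑ i ∈ range (L + 1), C₁ (pathCliqueChain hL v i) =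
      ∑ x with x.val ≤ L, C x + ∑ x ∈ s, C x / 2 := by
    have hlast : pathCliqueChain hL v L = hub := pathCliqueChain_of_le hL v le_rfl
    rw [← sum_range_pathCliqueChain hL v, sum_range_succ, sum_range_succ, hlast, hhub, add_assoc]
    congr 1
    refine sum_congr rfl fun i hi => hrest _ ?_ ?_ <;>
      simp [s, hub, pathCliqueChain_of_le hL v (mem_range.1 hi).le] at hi ⊢ <;> omega
  have hhalf : ∑ x ∈ s, C x ≤ 2 * ∑ x ∈ s, C x / 2 + n :=
    calc ∑ x ∈ s, C x ≤ ∑ x ∈ s, (2 * (C x / 2) + 1) := sum_le_sum fun x _ => by omega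
      _ = 2 * ∑ x ∈ s, C x / 2 + #s := by
        rw [sum_add_distrib, mul_sum, sum_const, smul_eq_mul, mul_one]
      _ ≤ 2 * ∑ x ∈ s, C x / 2 + n := by
        gcongr
        exact card_le_univ s |>.trans (Fintype.card_fin n).le
  have hsplit : ∑ x with x.val ≤ L, C x + ∑ x ∈ s, C x = ∑ x, C x :=
    sum_filter_le_add_sum_filter_lt C
  obtain ⟨C', hC', h1⟩ := exists_reflTransGen_path (pathCliqueChain hL v) L
    (fun i hi => pathCliqueChain_adj hL v hi) (pathCliqueChain_injOn hL v) C₁ (by omega) hv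
  exact ⟨C', hC₁.trans hC', by rwa [pathCliqueChain_of_le hL v hv] at h1⟩

lemma exists_reflTransGen_pathClique_of_lt (hn : 2 ^ L ≤ n) {C : Fin n → ℕ}
    (hC : 3 * n ≤ ∑ x, C x) {v : Fin n} (hv : L < v.val) :
    ∃ C', Relation.ReflTransGen (PebblingMove (pathClique n L)) C C' ∧ 1 ≤ C' v := by
  by_cases hmove : ∃ u : Fin n, L ≤ u.val ∧ u ≠ v ∧ 2 ≤ C u
  · obtain ⟨u, hu, huv, hCu⟩ := hmove
    exact ⟨_, .single (pebblingMove_update (pathClique_adj_of_le hu hv.le huv) hCu), by simp⟩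
  push Not at hmove
  have hL : L < n := Nat.lt_two_pow_self.trans_le hn
  set s : Finset (Fin n) := {x | L < x.val}
  have hsplit : ∑ x with x.val ≤ L, C x + ∑ x ∈ s, C x = ∑ x, C x :=
    sum_filter_le_add_sum_filter_lt C
  have hvs : v ∈ s := by simpa [s] using hv
  have hclique : ∑ x ∈ s.erase v, C x ≤ n :=
    calc ∑ x ∈ s.erase v, C x ≤ #(s.erase v) • 1 := sum_le_card_nsmul _ _ _ fun x hx => by
          have := hmove x (mem_filter.1 (mem_of_mem_erase hx)).2.le (ne_of_mem_erase hx)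
          omega
      _ ≤ n := by simpa using card_le_univ (s.erase v) |>.trans (Fintype.card_fin n).le
  have hpath : ∑ i ∈ range (L + 1 + 1), C (pathCliqueChain hL v i) =
      ∑ x with x.val ≤ L, C x + C v := by
    rw [sum_range_succ, sum_range_pathCliqueChain, pathCliqueChain_succ]
  have hclique_split := add_sum_erase s C hvs
  obtain ⟨C', hC', h1⟩ := exists_reflTransGen_path (pathCliqueChain hL v) (L + 1)
    (fun i hi => (Nat.lt_succ_iff_lt_or_eq.1 hi).elim (pathCliqueChain_adj hL v)
      (fun h => h ▸ pathCliqueChain_adj_succ hL v hv))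
    (pathCliqueChain_injOn_succ hL v hv) C (by rw [pow_succ]; omega) le_rfl
  exact ⟨C', hC', by rwa [pathCliqueChain_succ] at h1⟩

theorem solvable_pathClique (hn : 2 ^ L ≤ n) {C : Fin n → ℕ} (hC : 3 * n ≤ ∑ x, C x) :
    Solvable (pathClique n L) C := fun v =>
  (le_or_gt v.val L).elim (exists_reflTransGen_pathClique_of_le hn hC)
    (exists_reflTransGen_pathClique_of_lt hn hC)

theorem pebblingNumber_pathClique_le (hn : 2 ^ L ≤ n) :
    pebblingNumber (pathClique n L) ≤ 3 * n :=
  Nat.sInf_le fun _ hC => solvable_pathClique hn hC.ge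

end Solvable

/-- For all sufficiently large `n`, `π(G_n) ≤ 3n`. -/
theorem pebblingNumber_Ggraph_le : ∃ N : ℕ, ∀ n : ℕ, N ≤ n →
    pebblingNumber (Ggraph n) ≤ 3 * n :=
  ⟨1, fun _ hn => pebblingNumber_pathClique_le (Nat.pow_log_le_self 2 (by omega))⟩
end

section
/- With parameter m = 1000, for all sufficiently large n the pebbling number of H_n satisfies π(H_n) ≥ 100n. -/
open Finset

/-!
In `H_n` the far ends `0` and `L'` of the two paths are at distance `2L'`, and on a connected
graph `π(G) ≥ 2^dist(u, v)`: with `t < 2^dist(u, v)` pebbles on `u`, weigh a pebble on `x` by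
`2^(-dist(x, v))`. A move never increases the total weight, which starts below `1`, the weight
of a single pebble on `v`. Finally `L' ≥ (log₂ n)/2 + 999` gives `2^(2L') > 100 n`.
-/

namespace SimpleGraph

variable {V : Type*} {G : SimpleGraph V}

lemma Walk.le_add_length {f : V → ℕ} (hf : ∀ a b, G.Adj a b → f a ≤ f b + 1) {u v : V}
    (p : G.Walk u v) : f u ≤ f v + p.length := by
  induction p with
  | nil => simp
  | cons h p ih => grind [Walk.length_cons, hf _ _ h]

lemma Reachable.le_add_dist {f : V → ℕ} (hf : ∀ a b, G.Adj a b → f a ≤ f b + 1) {u v : V}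
    (h : G.Reachable u v) : f u ≤ f v + G.dist u v := by
  obtain ⟨p, hp⟩ := h.exists_walk_length_eq_dist
  exact hp ▸ p.le_add_length hf

variable [DecidableEq V]

lemma Adj.exists_reflTransGen_pebblingMove {u v : V} (h : G.Adj u v) (a : ℕ) {C : V → ℕ}
    (hC : 2 * a ≤ C u) :
    ∃ C', Relation.ReflTransGen (PebblingMove G) C C' ∧ C v + a ≤ C' v := by
  induction a generalizing C with
  | zero => exact ⟨C, .refl, le_rfl⟩
  | succ a ih =>
    obtain ⟨C', hC', hv⟩ :=
      ih (C := fun w => if w = u then C u - 2 else if w = v then C v + 1 else C w) (by simp only [↓reduceIte]; omega)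
    refine ⟨C', .head ⟨u, v, h, by omega, rfl⟩ hC', ?_⟩
    simp only [h.ne.symm, if_false, if_true] at hv
    omega

lemma Walk.exists_reflTransGen_pebblingMove {u v : V} (p : G.Walk u v) {C : V → ℕ}
    (hC : 2 ^ p.length ≤ C u) :
    ∃ C', Relation.ReflTransGen (PebblingMove G) C C' ∧ 1 ≤ C' v := by
  induction p generalizing C with
  | nil => exact ⟨C, .refl, by simpa using hC⟩
  | cons h p ih =>
    rw [length_cons, pow_succ] at hC
    obtain ⟨C₁, h₁, hC₁⟩ := h.exists_reflTransGen_pebblingMove (2 ^ p.length) (C := C) (by omega)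
    obtain ⟨C', h', hv⟩ := ih (C := C₁) (by omega)
    exact ⟨C', h₁.trans h', hv⟩

variable [Fintype V]

lemma Connected.solvable_of_card_mul_two_pow_le (hG : G.Connected) {C : V → ℕ}
    (hC : Fintype.card V * 2 ^ Fintype.card V ≤ ∑ v, C v) : Solvable G C := by
  have : Nonempty V := hG.nonempty
  obtain ⟨u, -, hu⟩ := exists_le_of_sum_le (f := fun _ ↦ 2 ^ Fintype.card V) univ_nonempty
    (by simpa using hC)
  intro v
  obtain ⟨p, hp, -⟩ := hG.exists_path_of_dist u v
  exact p.exists_reflTransGen_pebblingMove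
    (le_trans (Nat.pow_le_pow_right two_pos hp.length_lt.le) hu)

variable {w : V → ℝ}

lemma PebblingMove.sum_mul_weight_le (hw : ∀ u v, G.Adj u v → w v ≤ 2 * w u) {C C' : V → ℕ}
    (h : PebblingMove G C C') : ∑ x, (C' x : ℝ) * w x ≤ ∑ x, (C x : ℝ) * w x := by
  obtain ⟨u, v, huv, h2, rfl⟩ := h
  have hC' : ∀ x, ((if x = u then C u - 2 else if x = v then C v + 1 else C x : ℕ) : ℝ) =
      C x - 2 * (if x = u then 1 else 0) + (if x = v then 1 else 0) := by
    intro x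
    rcases eq_or_ne x u with rfl | hxu
    · simp [huv.ne, Nat.cast_sub h2]
    · rcases eq_or_ne x v with rfl | hxv <;> simp [*]
  simp only [hC', add_mul, sub_mul, mul_assoc, ite_mul, one_mul, zero_mul, sum_add_distrib,
    sum_sub_distrib, ← mul_sum, sum_ite_eq', mem_univ, if_true]
  linarith [hw u v huv]

lemma sum_mul_weight_le_of_reflTransGen (hw : ∀ u v, G.Adj u v → w v ≤ 2 * w u)
    {C C' : V → ℕ} (h : Relation.ReflTransGen (PebblingMove G) C C') :
    ∑ x, (C' x : ℝ) * w x ≤ ∑ x, (C x : ℝ) * w x := by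
  induction h with
  | refl => exact le_rfl
  | tail _ step ih => exact (PebblingMove.sum_mul_weight_le hw step).trans ih

lemma not_solvable_of_sum_mul_weight_lt (hw₀ : ∀ v, 0 ≤ w v)
    (hw : ∀ u v, G.Adj u v → w v ≤ 2 * w u) {C : V → ℕ} {v : V}
    (hC : ∑ x, (C x : ℝ) * w x < w v) : ¬ Solvable G C := by
  intro hs
  obtain ⟨C', hC', hv⟩ := hs v
  have : w v ≤ ∑ x, (C' x : ℝ) * w x :=
    calc w v ≤ C' v * w v := le_mul_of_one_le_left (hw₀ v) (by exact_mod_cast hv)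
      _ ≤ ∑ x, (C' x : ℝ) * w x :=
        single_le_sum (fun x _ ↦ mul_nonneg (Nat.cast_nonneg _) (hw₀ x)) (mem_univ v)
  linarith [sum_mul_weight_le_of_reflTransGen hw hC']

lemma Connected.not_solvable_single (hG : G.Connected) {u v : V} {t : ℕ}
    (ht : t < 2 ^ G.dist u v) : ¬ Solvable G (Pi.single u t) := by
  refine not_solvable_of_sum_mul_weight_lt (w := fun x ↦ (2⁻¹ : ℝ) ^ G.dist x v) (v := v)
    (fun _ ↦ by positivity) (fun a b hab ↦ ?_) ?_
  · have hd : G.dist a v ≤ G.dist b v + 1 := by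
      have := hG.dist_triangle (u := a) (v := b) (w := v)
      rw [dist_eq_one_iff_adj.mpr hab] at this
      omega
    calc (2⁻¹ : ℝ) ^ G.dist b v = 2 * 2⁻¹ ^ (G.dist b v + 1) := by ring
      _ ≤ 2 * 2⁻¹ ^ G.dist a v := by
        gcongr ?_ * ?_
        exact pow_le_pow_of_le_one (by norm_num) (by norm_num) hd
  · rw [Fintype.sum_eq_single u fun x hx ↦ by simp [hx], Pi.single_eq_same, dist_self, pow_zero,
      inv_pow, ← div_eq_mul_inv, div_lt_one (by positivity)]
    exact_mod_cast ht

lemma Connected.two_pow_dist_le_pebblingNumber (hG : G.Connected) (u v : V) :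
    2 ^ G.dist u v ≤ pebblingNumber G := by
  -- `pebblingNumber` is an `sInf`, hence `0` unless some size makes every configuration solvable
  refine le_csInf ⟨_, fun C hC ↦ hG.solvable_of_card_mul_two_pow_le hC.ge⟩ fun t ht ↦ ?_
  by_contra! h
  exact hG.not_solvable_single h (ht _ (by simp))

end SimpleGraph

section twoPathClique

open SimpleGraph

variable {n L : ℕ}

lemma twoPathClique_reachable_hub (h : 2 * L < n) (i : Fin n) :
    (twoPathClique n L).Reachable i ⟨2 * L, h⟩ := by
  obtain ⟨i, hi⟩ := i
  induction hk : 2 * L - i generalizing i with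
  | zero =>
    rcases eq_or_ne i (2 * L) with rfl | hne
    · rfl
    · exact Adj.reachable (by
        simp only [twoPathClique, fromRel_adj, ne_eq, Fin.ext_iff, and_true]
        omega)
  | succ k ih =>
    by_cases hhub : i + 1 = L ∨ i + 1 = 2 * L
    · exact Adj.reachable (by
        simp only [twoPathClique, fromRel_adj, ne_eq, Fin.ext_iff, and_true]
        omega)
    · have hadj : (twoPathClique n L).Adj ⟨i, hi⟩ ⟨i + 1, by omega⟩ := by
        simp only [twoPathClique, fromRel_adj, ne_eq, Fin.ext_iff, true_and]
        omega
      exact hadj.reachable.trans (ih (i + 1) _ (by omega))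

lemma twoPathClique_connected (h : 2 * L < n) : (twoPathClique n L).Connected :=
  have : Nonempty (Fin n) := ⟨⟨0, by omega⟩⟩
  .mk fun i j ↦ (twoPathClique_reachable_hub h i).trans (twoPathClique_reachable_hub h j).symm

lemma two_mul_le_dist_twoPathClique (h : 2 * L < n) :
    2 * L ≤ (twoPathClique n L).dist ⟨0, by omega⟩ ⟨L, by omega⟩ := by
  let f : Fin n → ℕ := fun i ↦ if i < L then 2 * L - i else if i < 2 * L then i - L else L
  have hf : ∀ a b, (twoPathClique n L).Adj a b → f a ≤ f b + 1 := by
    intro a b hab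
    simp only [twoPathClique, fromRel_adj] at hab
    simp only [f]
    split_ifs <;> omega
  have := (twoPathClique_connected h).preconnected ⟨0, by omega⟩ ⟨L, by omega⟩ |>.le_add_dist hf
  simp only [f] at this
  split_ifs at this <;> omega

end twoPathClique

lemma Lp_eq (n m : ℕ) : Lp n m = Nat.log 2 n / 2 + m := by
  have hlog : 0 ≤ Real.logb 2 n := (Nat.cast_nonneg _).trans (Real.natLog_le_logb n 2)
  rw [Lp, Nat.floor_add_natCast (by positivity), Nat.floor_div_ofNat]
  exact_mod_cast congrArg (· / 2 + m) (Real.natFloor_logb_natCast 2 n)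

lemma lt_four_pow_log_two_div_two_add_one (n : ℕ) : n < 4 ^ (Nat.log 2 n / 2 + 1) :=
  calc n < 2 ^ (Nat.log 2 n + 1) := Nat.lt_pow_succ_log_self one_lt_two n
    _ ≤ 2 ^ (2 * (Nat.log 2 n / 2 + 1)) := Nat.pow_le_pow_right two_pos (by omega)
    _ = 4 ^ (Nat.log 2 n / 2 + 1) := by rw [pow_mul]; norm_num

lemma hundred_mul_lt_two_pow_two_mul_Lp {m : ℕ} (hm : 5 ≤ m) (n : ℕ) :
    100 * n < 2 ^ (2 * Lp n m) := by
  have h := lt_four_pow_log_two_div_two_add_one n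
  calc 100 * n < 4 ^ 4 * 4 ^ (Nat.log 2 n / 2 + 1) := by omega
    _ = 4 ^ (Nat.log 2 n / 2 + 5) := by ring
    _ ≤ 4 ^ Lp n m := Nat.pow_le_pow_right (by norm_num) (by rw [Lp_eq]; omega)
    _ = 2 ^ (2 * Lp n m) := by rw [pow_mul]; norm_num

lemma two_mul_Lp_lt {n : ℕ} (hn : 2 ^ 12 ≤ n) : 2 * Lp n 1000 < n := by
  set K := Nat.log 2 n
  have hK : 12 ≤ K := Nat.le_log_of_pow_le one_lt_two hn
  have h₁ : K - 1 < 2 ^ (K - 1) := Nat.lt_two_pow_self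
  have h₂ : 2 ^ 11 ≤ 2 ^ (K - 1) := Nat.pow_le_pow_right two_pos (by omega)
  have h₃ : 2 ^ K = 2 * 2 ^ (K - 1) := by rw [← pow_succ']; congr; omega
  have h₄ : 2 ^ K ≤ n := Nat.pow_log_le_self 2 (by omega)
  rw [Lp_eq]
  omega

/-- With `m = 1000`, for all sufficiently large `n`, `π(H_n) ≥ 100n`. -/
theorem pebblingNumber_Hgraph_ge : ∃ N : ℕ, ∀ n : ℕ, N ≤ n →
    100 * n ≤ pebblingNumber (Hgraph n 1000) := by
  refine ⟨2 ^ 12, fun n hn ↦ ?_⟩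
  have hL := two_mul_Lp_lt hn
  calc 100 * n ≤ 2 ^ (2 * Lp n 1000) := (hundred_mul_lt_two_pow_two_mul_Lp (by norm_num) n).le
    _ ≤ 2 ^ (twoPathClique n (Lp n 1000)).dist ⟨0, by omega⟩ ⟨Lp n 1000, by omega⟩ :=
      Nat.pow_le_pow_right two_pos (two_mul_le_dist_twoPathClique hL)
    _ ≤ pebblingNumber (Hgraph n 1000) :=
      (twoPathClique_connected hL).two_pow_dist_le_pebblingNumber _ _
end

section
/- Let t = t(n) = ⌊n^{0.8}⌋. The proportion, among all C(n+t−1, t) configurations of t pebbles on n vertices, of those configurations whose number of birthdays B(C) is at most n^{0.55}, tends to 0 as n → ∞. Equivalently, a uniformly random configuration of ⌊n^{0.8}⌋ pebbles on n vertices has at least n^{0.55} birthdays with probability tending to 1. -/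
open Finset

/-!
Let `N b` be the number of configurations of `t` pebbles on `n` vertices with `b` birthdays.
Choosing the `t - b` occupied vertices and then a composition of `t` into `t - b` positive
parts gives `N b = C(n, t - b) * C(t - 1, b)`, so
`N (b + 1) / N b = (t - b) (t - b - 1) / ((n - t + b + 1) (b + 1))`.
For `t = ⌊n^0.8⌋` and `b ≤ 2s` with `s = ⌊n^0.55⌋` this ratio is of order `n^0.05`, in
particular at least `2`. Hence `2^(s+1) N b ≤ N (b + s + 1)` for every `b ≤ s`, and summing
over `b ≤ s` bounds the proportion of configurations with at most `s` birthdays by `2^-(s+1)`.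
-/

open Filter

section Occupied

variable {α : Type*} [Fintype α]

def occupied (C : α → ℕ) : Finset α := univ.filter fun i => 1 ≤ C i

@[simp]
lemma mem_occupied {C : α → ℕ} {i : α} : i ∈ occupied C ↔ 1 ≤ C i := by
  simp [occupied]

def birthdays (C : α → ℕ) : ℕ := ∑ i, C i - #(occupied C)

lemma sum_eq_sum_occupied_add_card (C : α → ℕ) :
    ∑ i, C i = ∑ i ∈ occupied C, (C i - 1) + #(occupied C) := by
  calc ∑ i, C i = ∑ i ∈ occupied C, C i :=
        (sum_filter_of_ne fun _ _ hi => Nat.one_le_iff_ne_zero.2 hi).symm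
    _ = ∑ i ∈ occupied C, ((C i - 1) + 1) :=
        sum_congr rfl fun i hi => (Nat.sub_add_cancel (mem_occupied.1 hi)).symm
    _ = ∑ i ∈ occupied C, (C i - 1) + #(occupied C) := by rw [sum_add_distrib, card_eq_sum_ones]

lemma birthdays_eq_sum (C : α → ℕ) : birthdays C = ∑ i ∈ occupied C, (C i - 1) := by
  rw [birthdays, sum_eq_sum_occupied_add_card, Nat.add_sub_cancel]

lemma birthdays_add_card_occupied (C : α → ℕ) : birthdays C + #(occupied C) = ∑ i, C i := by
  rw [birthdays_eq_sum, ← sum_eq_sum_occupied_add_card]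

lemma natCard_sum_eq (α : Type*) [Fintype α] (m : ℕ) :
    Nat.card {C : α → ℕ // ∑ i, C i = m} = (Fintype.card α + m - 1).choose m := by
  classical
  rw [← Nat.card_congr (Sym.equivNatSumOfFintype α m), Sym.natCard_sym_eq_choose,
    Nat.card_eq_fintype_card]

def occupiedEquiv [DecidableEq α] (S : Finset α) : {C : α → ℕ // occupied C = S} ≃ (S → ℕ) where
  toFun C x := C.1 x - 1
  invFun D := ⟨fun i => if h : i ∈ S then D ⟨i, h⟩ + 1 else 0, by
    ext i
    by_cases h : i ∈ S <;> simp [h]⟩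
  left_inv := by
    rintro ⟨C, rfl⟩
    ext i
    by_cases h : 1 ≤ C i
    · simp [h]
    · simp [h]
      omega
  right_inv D := by ext; simp

lemma natCard_occupied_eq_birthdays_eq (S : Finset α) (b : ℕ) :
    Nat.card {C : α → ℕ // occupied C = S ∧ birthdays C = b} = (#S + b - 1).choose b := by
  classical
  rw [← Nat.card_congr (Equiv.subtypeSubtypeEquivSubtypeInter _ (fun C => birthdays C = b)),
    ← Fintype.card_coe S, ← natCard_sum_eq]
  refine Nat.card_congr (Equiv.subtypeEquiv (occupiedEquiv S) fun C => ?_)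
  obtain ⟨C, rfl⟩ := C
  rw [birthdays_eq_sum, ← sum_coe_sort]
  rfl

end Occupied

section Configs

variable {n t : ℕ}

lemma mem_configs {C : Fin n → ℕ} : C ∈ configs n t ↔ ∑ i, C i = t := by
  simp only [configs, mem_filter, Fintype.mem_piFinset, mem_range, and_iff_right_iff_imp]
  rintro rfl i
  exact Nat.lt_succ_of_le (single_le_sum (fun j _ => Nat.zero_le (C j)) (mem_univ i))

lemma card_filter_configs (p : (Fin n → ℕ) → Prop) [DecidablePred p] :
    #{C ∈ configs n t | p C} = Nat.card {C : Fin n → ℕ // ∑ i, C i = t ∧ p C} := by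
  rw [← Nat.card_eq_finsetCard]
  exact Nat.card_congr (Equiv.subtypeEquivRight fun C => by rw [mem_filter, mem_configs])

lemma card_configs : #(configs n t) = (n + t - 1).choose t := by
  simpa [natCard_sum_eq] using card_filter_configs (n := n) (t := t) fun _ => True

lemma card_configs_filter_birthdays_eq {b : ℕ} (hb : b ≤ t) :
    #{C ∈ configs n t | birthdays C = b} = n.choose (t - b) * (t - 1).choose b := by
  have hfiber : ∀ S ∈ powersetCard (t - b) (univ : Finset (Fin n)),
      #{C ∈ {C ∈ configs n t | birthdays C = b} | occupied C = S} = (t - 1).choose b := by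
    intro S hS
    rw [mem_powersetCard_univ] at hS
    have hcount : t - b + b - 1 = t - 1 := by omega
    rw [filter_filter, card_filter_configs, ← hcount, ← hS, ← natCard_occupied_eq_birthdays_eq]
    refine Nat.card_congr (Equiv.subtypeEquivRight fun C => ?_)
    have hsum := birthdays_add_card_occupied C
    constructor
    · rintro ⟨-, hbC, hSC⟩
      exact ⟨hSC, hbC⟩
    · rintro ⟨rfl, hbC⟩
      exact ⟨by omega, hbC, rfl⟩
  rw [card_eq_sum_card_fiberwise (f := occupied) (t := powersetCard (t - b) univ) ?_,
    sum_congr rfl hfiber, sum_const, card_powersetCard, card_univ, Fintype.card_fin,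
    smul_eq_mul]
  intro C hC
  rw [mem_coe, mem_filter, mem_configs] at hC
  have hsum := birthdays_add_card_occupied C
  rw [mem_coe, mem_powersetCard_univ]
  omega

lemma natCard_eq_card_filter_birthdays_le_floor {x : ℝ} (hx : 0 ≤ x) :
    Nat.card {C : Fin n → ℕ // ∑ i, C i = t ∧
        ((t - (univ.filter fun i => 1 ≤ C i).card : ℕ) : ℝ) ≤ x}
      = #{C ∈ configs n t | birthdays C ≤ ⌊x⌋₊} := by
  rw [card_filter_configs]
  refine Nat.card_congr (Equiv.subtypeEquivRight fun C => and_congr_right fun hC => ?_)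
  rw [birthdays, hC, Nat.le_floor_iff hx]
  rfl

end Configs

lemma mul_choose_mul_choose_le {n j b r : ℕ} (h : r * ((n - j) * (b + 1)) ≤ (j + 1) * j) :
    r * (n.choose (j + 1) * (j + b).choose b) ≤ n.choose j * (j + b).choose (b + 1) := by
  rcases le_or_gt n j with hnj | hjn
  · simp [Nat.choose_eq_zero_of_lt (Nat.lt_succ_of_le hnj)]
  have hn := Nat.choose_succ_right_eq n j
  have hjb := Nat.choose_succ_right_eq (j + b) b
  rw [Nat.add_sub_cancel] at hjb
  refine Nat.le_of_mul_le_mul_right ?_ (Nat.mul_pos (Nat.sub_pos_of_lt hjn) b.succ_pos)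
  calc r * (n.choose (j + 1) * (j + b).choose b) * ((n - j) * (b + 1))
      = n.choose (j + 1) * (j + b).choose b * (r * ((n - j) * (b + 1))) := by ring
    _ ≤ n.choose (j + 1) * (j + b).choose b * ((j + 1) * j) := Nat.mul_le_mul_left _ h
    _ = n.choose (j + 1) * (j + 1) * ((j + b).choose b * j) := by ring
    _ = n.choose j * (j + b).choose (b + 1) * ((n - j) * (b + 1)) := by rw [hn, ← hjb]; ring

section Doubling

variable {f : ℕ → ℕ} {r : ℕ}

lemma pow_mul_le_of_mul_le_succ {a i : ℕ} (hf : ∀ b < a + i, r * f b ≤ f (b + 1)) :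
    r ^ i * f a ≤ f (a + i) := by
  induction i with
  | zero => simp
  | succ i ih =>
    calc r ^ (i + 1) * f a = r * (r ^ i * f a) := by ring
      _ ≤ r * f (a + i) := Nat.mul_le_mul_left r (ih fun b hb => hf b (by omega))
      _ ≤ f (a + (i + 1)) := hf (a + i) (by omega)

lemma pow_mul_sum_range_le_sum_range_two_mul {m : ℕ}
    (hf : ∀ b, b + 1 < 2 * m → r * f b ≤ f (b + 1)) :
    r ^ m * ∑ b ∈ range m, f b ≤ ∑ b ∈ range (2 * m), f b := by
  rw [two_mul, sum_range_add, mul_sum]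
  refine le_add_left (sum_le_sum fun a ha => ?_)
  rw [add_comm m a]
  exact pow_mul_le_of_mul_le_succ fun b hb => hf b (by rw [mem_range] at ha; omega)

end Doubling

theorem two_pow_mul_card_birthdays_le_le_card_configs {n t s : ℕ} (ht : 2 * s + 1 < t)
    (h : 2 * (2 * s + 1) * n ≤ (t - (2 * s + 1)) ^ 2) :
    2 ^ (s + 1) * #{C ∈ configs n t | birthdays C ≤ s} ≤ #(configs n t) := by
  set N : ℕ → ℕ := fun b => #{C ∈ configs n t | birthdays C = b}
  have hdouble : ∀ b, b + 1 < 2 * (s + 1) → 2 * N b ≤ N (b + 1) := by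
    intro b hb
    set j := t - (b + 1)
    simp only [N]
    rw [card_configs_filter_birthdays_eq (by omega), card_configs_filter_birthdays_eq (by omega),
      show t - b = j + 1 by omega, show t - 1 = j + b by omega]
    apply mul_choose_mul_choose_le
    calc 2 * ((n - j) * (b + 1)) ≤ 2 * (2 * s + 1) * n := by
          rw [mul_assoc, mul_comm _ n]
          exact Nat.mul_le_mul_left 2 (Nat.mul_le_mul (Nat.sub_le n j) (by omega))
      _ ≤ (t - (2 * s + 1)) ^ 2 := h
      _ ≤ (j + 1) * j := by rw [sq]; exact Nat.mul_le_mul (by omega) (by omega)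
  have hbad : #{C ∈ configs n t | birthdays C ≤ s} = ∑ b ∈ range (s + 1), N b := by
    simp only [N, sum_card_fiberwise_eq_card_filter, mem_range, Nat.lt_succ_iff]
  calc 2 ^ (s + 1) * #{C ∈ configs n t | birthdays C ≤ s}
      ≤ ∑ b ∈ range (2 * (s + 1)), N b := hbad ▸ pow_mul_sum_range_le_sum_range_two_mul hdouble
    _ = #{C ∈ configs n t | birthdays C ∈ range (2 * (s + 1))} :=
        sum_card_fiberwise_eq_card_filter _ _ _
    _ ≤ #(configs n t) := card_filter_le _ _

lemma eventually_floor_rpow_lt_and_le :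
    ∀ᶠ n : ℕ in atTop, 2 * ⌊(n : ℝ) ^ (0.55 : ℝ)⌋₊ + 1 < ⌊(n : ℝ) ^ (0.8 : ℝ)⌋₊ ∧
      2 * (2 * ⌊(n : ℝ) ^ (0.55 : ℝ)⌋₊ + 1) * n
        ≤ (⌊(n : ℝ) ^ (0.8 : ℝ)⌋₊ - (2 * ⌊(n : ℝ) ^ (0.55 : ℝ)⌋₊ + 1)) ^ 2 := by
  filter_upwards [((tendsto_rpow_atTop (by norm_num : (0 : ℝ) < 0.05)).comp
    tendsto_natCast_atTop_atTop).eventually_ge_atTop 24] with n hx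
  -- with `x = n^(1/20)` all three powers of `n` become polynomials in `x`
  set x := (n : ℝ) ^ (0.05 : ℝ)
  have hpow (k : ℕ) : (n : ℝ) ^ ((0.05 : ℝ) * k) = x ^ k := by
    rw [Real.rpow_mul (Nat.cast_nonneg n), Real.rpow_natCast]
  have h11 : (n : ℝ) ^ (0.55 : ℝ) = x ^ 11 := by rw [← hpow]; norm_num
  have h16 : (n : ℝ) ^ (0.8 : ℝ) = x ^ 16 := by rw [← hpow]; norm_num
  have h20 : (n : ℝ) = x ^ 20 := by rw [← hpow]; norm_num
  rw [h11, h16]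
  set s := ⌊x ^ 11⌋₊
  set t := ⌊x ^ 16⌋₊
  have hx : 24 ≤ x := hx
  have hs : (s : ℝ) ≤ x ^ 11 := Nat.floor_le (by positivity)
  have ht : x ^ 16 - 1 < t := Nat.sub_one_lt_floor _
  have hx11 : 1 ≤ x ^ 11 := one_le_pow₀ (by linarith)
  have hx16 : x ^ 16 = x ^ 5 * x ^ 11 := by ring
  have hx5 : 24 ^ 5 ≤ x ^ 5 := pow_le_pow_left₀ (by norm_num) hx 5
  have hgap : x ^ 16 / 2 ≤ (t : ℝ) - (2 * s + 1) := by nlinarith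
  have hlt : 2 * s + 1 < t := by
    have : ((2 * s + 1 : ℕ) : ℝ) < t := by push_cast; nlinarith
    exact_mod_cast this
  refine ⟨hlt, ?_⟩
  rw [← Nat.cast_le (α := ℝ)]
  push_cast [Nat.cast_sub hlt.le, h20]
  have hx0 : 0 < x := by linarith
  calc 2 * (2 * (s : ℝ) + 1) * x ^ 20 ≤ 6 * x ^ 31 := by nlinarith [pow_pos hx0 20]
    _ ≤ (x ^ 16 / 2) ^ 2 := by nlinarith [pow_pos hx0 31]
    _ ≤ ((t : ℝ) - (2 * s + 1)) ^ 2 := pow_le_pow_left₀ (by positivity) hgap 2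

/-- With `t = ⌊n^{0.8}⌋`, the proportion of configurations of `t`
pebbles on `n` vertices whose number of birthdays `B(C) = t - #{i : C i ≥ 1}` is at
most `n^{0.55}` tends to `0` as `n → ∞`. -/
theorem few_birthdays_proportion_tendsto_zero :
    Filter.Tendsto (fun n : ℕ =>
      (Nat.card {C : Fin n → ℕ // (∑ i, C i = ⌊(n : ℝ) ^ (0.8 : ℝ)⌋₊) ∧
          ((⌊(n : ℝ) ^ (0.8 : ℝ)⌋₊ - (Finset.univ.filter fun i => 1 ≤ C i).card : ℕ) : ℝ)
            ≤ (n : ℝ) ^ (0.55 : ℝ)} : ℝ) /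
        (Nat.choose (n + ⌊(n : ℝ) ^ (0.8 : ℝ)⌋₊ - 1) ⌊(n : ℝ) ^ (0.8 : ℝ)⌋₊ : ℝ))
      Filter.atTop (nhds 0) := by
  have hs : Tendsto (fun n : ℕ => ⌊(n : ℝ) ^ (0.55 : ℝ)⌋₊ + 1) atTop atTop :=
    (tendsto_add_atTop_nat 1).comp (tendsto_nat_floor_atTop.comp
      ((tendsto_rpow_atTop (by norm_num)).comp tendsto_natCast_atTop_atTop))
  refine squeeze_zero' (.of_forall fun n => by positivity) ?_
    ((tendsto_pow_atTop_nhds_zero_of_lt_one (by norm_num : (0 : ℝ) ≤ 1 / 2) (by norm_num)).comp hs)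
  filter_upwards [eventually_floor_rpow_lt_and_le] with n ⟨hlt, hwindow⟩
  dsimp only [Function.comp_apply]
  rw [natCard_eq_card_filter_birthdays_le_floor (by positivity), ← card_configs]
  refine div_le_of_le_mul₀ (Nat.cast_nonneg _) (by positivity) ?_
  set s := ⌊(n : ℝ) ^ (0.55 : ℝ)⌋₊
  set t := ⌊(n : ℝ) ^ (0.8 : ℝ)⌋₊
  have hcount := two_pow_mul_card_birthdays_le_le_card_configs hlt hwindow
  calc (#{C ∈ configs n t | birthdays C ≤ s} : ℝ)
      = (1 / 2) ^ (s + 1) * (2 ^ (s + 1) * #{C ∈ configs n t | birthdays C ≤ s}) := by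
        rw [← mul_assoc, ← mul_pow]; norm_num
    _ ≤ (1 / 2) ^ (s + 1) * #(configs n t) := by gcongr; exact_mod_cast hcount
end

section
/- Let K_N be the complete graph on N ≥ 2 vertices, let C be a pebbling configuration on K_N of size t, and let B(C) = t − |{u : C(u) ≥ 1}| be its number of birthdays. If B(C) ≥ 2s for an integer s ≥ 0, then for every vertex v of K_N there is a finite sequence of pebbling moves transforming C into a configuration with at least s pebbles on v. -/
open Finset

/-!
Send pebbles to `v` greedily from any other vertex holding at least two. With the truncated
surplus `C u - 1` of a vertex, the number of birthdays is `∑ u, (C u - 1)`. A move into `v`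
adds a pebble to `v` and lowers the surplus off `v` by at most two, so
`2 * C v + ∑ u ≠ v, (C u - 1)` never drops; once no other vertex holds two pebbles that
surplus is zero, leaving `2 * C' v ≥ ∑ u, (C u - 1) ≥ 2 * s`.
-/

section Pebbling

variable {V : Type*} [DecidableEq V]

def movePebble (C : V → ℕ) (u v : V) : V → ℕ :=
  fun w => if w = u then C u - 2 else if w = v then C v + 1 else C w

lemma pebblingMove_movePebble {G : SimpleGraph V} {C : V → ℕ} {u v : V} (huv : G.Adj u v)
    (hu : 2 ≤ C u) : PebblingMove G C (movePebble C u v) :=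
  ⟨u, v, huv, hu, rfl⟩

lemma movePebble_apply_left (C : V → ℕ) (u v : V) : movePebble C u v u = C u - 2 :=
  if_pos rfl

lemma movePebble_apply_right (C : V → ℕ) {u v : V} (huv : u ≠ v) :
    movePebble C u v v = C v + 1 := by
  simp [movePebble, huv.symm]

lemma movePebble_apply_of_ne (C : V → ℕ) {u v w : V} (hwu : w ≠ u) (hwv : w ≠ v) :
    movePebble C u v w = C w := by
  simp [movePebble, hwu, hwv]

omit [DecidableEq V] in
lemma sum_sub_one_eq_sum_sub_card [Fintype V] (C : V → ℕ) :
    ∑ u, (C u - 1) = ∑ u, C u - #{u | 1 ≤ C u} := by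
  have : ∑ u, (C u - 1) + #{u | 1 ≤ C u} = ∑ u, C u := by
    rw [card_filter, ← sum_add_distrib]
    exact sum_congr rfl fun u _ => by split_ifs <;> omega
  omega

lemma sum_erase_sub_one_movePebble_lt_and_le [Fintype V] (C : V → ℕ) {u v : V} (huv : u ≠ v)
    (hu : 2 ≤ C u) :
    ∑ w ∈ univ.erase v, (movePebble C u v w - 1) < ∑ w ∈ univ.erase v, (C w - 1) ∧
      ∑ w ∈ univ.erase v, (C w - 1) ≤ ∑ w ∈ univ.erase v, (movePebble C u v w - 1) + 2 := by
  have hu' : u ∈ univ.erase v := mem_erase.mpr ⟨huv, mem_univ u⟩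
  have hrest : ∑ w ∈ (univ.erase v).erase u, (movePebble C u v w - 1) =
      ∑ w ∈ (univ.erase v).erase u, (C w - 1) :=
    sum_congr rfl fun w hw => by
      rw [movePebble_apply_of_ne C (ne_of_mem_erase hw) (ne_of_mem_erase (mem_of_mem_erase hw))]
  rw [← add_sum_erase _ (fun w => movePebble C u v w - 1) hu',
    ← add_sum_erase _ (fun w => C w - 1) hu', hrest, movePebble_apply_left]
  omega

theorem exists_reflTransGen_pebblingMove_two_mul_le [Fintype V] {G : SimpleGraph V} {v : V}
    (hadj : ∀ u, u ≠ v → G.Adj u v) (C : V → ℕ) :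
    ∃ C', Relation.ReflTransGen (PebblingMove G) C C' ∧
      2 * C v + ∑ u ∈ univ.erase v, (C u - 1) ≤ 2 * C' v := by
  induction hS : ∑ u ∈ univ.erase v, (C u - 1) using Nat.strong_induction_on generalizing C
    with
  | _ S ih =>
    by_cases hmovable : ∃ u, u ≠ v ∧ 2 ≤ C u
    · obtain ⟨u, huv, hu⟩ := hmovable
      have hSD := sum_erase_sub_one_movePebble_lt_and_le C huv hu
      have hDv := movePebble_apply_right C huv
      obtain ⟨C', hDC', hC'⟩ := ih _ (by omega) (movePebble C u v) rfl
      exact ⟨C', .head (pebblingMove_movePebble (hadj u huv) hu) hDC', by omega⟩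
    · push Not at hmovable
      have hS0 : S = 0 := hS ▸ sum_eq_zero fun u hu => by
        have := hmovable u (ne_of_mem_erase hu)
        omega
      exact ⟨C, .refl, by omega⟩

end Pebbling

theorem complete_graph_move_pebbles_general (N : ℕ) (C : Fin N → ℕ) (t : ℕ)
    (htot : ∑ i, C i = t) (s : ℕ)
    (hB : 2 * s ≤ t - (Finset.univ.filter fun u => 1 ≤ C u).card) :
    ∀ v : Fin N, ∃ C' : Fin N → ℕ,
      Relation.ReflTransGen (PebblingMove (⊤ : SimpleGraph (Fin N))) C C' ∧ s ≤ C' v := by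
  intro v
  obtain ⟨C', hCC', hC'⟩ :=
    exists_reflTransGen_pebblingMove_two_mul_le (G := ⊤) (v := v) (fun _ huv => huv) C
  have hsplit := add_sum_erase univ (fun u => C u - 1) (mem_univ v)
  rw [sum_sub_one_eq_sum_sub_card, htot] at hsplit
  exact ⟨C', hCC', by omega⟩

/-- On the complete graph `K_N` (`N ≥ 2`), if a configuration `C` of
size `t` has `B(C) = t - #{u : C u ≥ 1} ≥ 2s` birthdays, then for every vertex `v` some
sequence of pebbling moves yields at least `s` pebbles on `v`. -/
theorem complete_graph_move_pebbles (N : ℕ) (hN : 2 ≤ N) (C : Fin N → ℕ) (t : ℕ)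
    (htot : ∑ i, C i = t) (s : ℕ)
    (hB : 2 * s ≤ t - (Finset.univ.filter fun u => 1 ≤ C u).card) :
    ∀ v : Fin N, ∃ C' : Fin N → ℕ,
      Relation.ReflTransGen (PebblingMove (⊤ : SimpleGraph (Fin N))) C C' ∧ s ≤ C' v :=
  complete_graph_move_pebbles_general N C t htot s hB
end
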